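/- arXiv:1601.05617 — 3 statements merged into one kernel-verified Lean document; each statement's English description precedes it below -/
import Mathlib

section
/- Let A and B be symmetric positive definite n×n real matrices with eigenvalues λ₁(A) ≤ ... ≤ λₙ(A) and λ₁(B) ≤ ... ≤ λₙ(B). Then for any increasing convex function f : ℝ → ℝ, ∑_{i=1}^n f(λᵢ(A)·λᵢ(B)) ≥ ∑_{i=1}^n f(A(i,i)·B(i,i)), where A(i,i) and B(i,i) denote diagonal entries. -/
/-!
The spectral decomposition writes the diagonals as averages of the eigenvalues,
`A i i = ∑ j, S i j * μ j` and `B i i = ∑ k, T i k * ν k`, where `S` and `T` are doubly stochastic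
(squared entries of orthogonal matrices). Jensen's inequality for the weights `S i j * T i k`
bounds `∑ i, f (A i i * B i i)` by `∑ j k, (Sᵀ * T) j k * f (μ j * ν k)`. As `Sᵀ * T` is doubly
stochastic, Birkhoff's theorem reduces this to permutation matrices, where it is a rearrangement
inequality: `(j, k) ↦ f (μ j * ν k)` is supermodular since `f` is increasing and convex and
`μ`, `ν` are nonnegative and increasing.
-/

open Finset Matrix Equiv

theorem ConvexOn.map_add_map_le_map_add_map_add_sub {f : ℝ → ℝ} (hf : ConvexOn ℝ Set.univ f)
    {c u v : ℝ} (hcu : c ≤ u) (hcv : c ≤ v) :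
    f u + f v ≤ f c + f (u + v - c) := by
  set e := u + v - c with he
  rcases (show c ≤ e by linarith).eq_or_lt with hce | hce
  · obtain rfl : u = c := by linarith
    obtain rfl : v = u := by linarith
    rw [← hce]
  -- `u` and `v` sit symmetrically in `[c, e]`, with weights `θ` and `1 - θ` swapped.
  set θ := (e - u) / (e - c)
  have hθ : θ * (e - c) = e - u := div_mul_cancel₀ _ (sub_pos.2 hce).ne'
  have hθ0 : 0 ≤ θ := div_nonneg (by linarith) (by linarith)
  have hθ1 : θ ≤ 1 := (div_le_one (by linarith)).2 (by linarith)
  have hu := hf.2 (Set.mem_univ c) (Set.mem_univ e) hθ0 (sub_nonneg.2 hθ1) (add_sub_cancel θ 1)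
  have hv := hf.2 (Set.mem_univ c) (Set.mem_univ e) (sub_nonneg.2 hθ1) hθ0 (sub_add_cancel 1 θ)
  simp only [smul_eq_mul] at hu hv
  rw [show θ * c + (1 - θ) * e = u by linear_combination -hθ] at hu
  rw [show (1 - θ) * c + θ * e = v by linear_combination hθ + he] at hv
  linarith

theorem ConvexOn.map_mul_add_map_mul_le {f : ℝ → ℝ} (hconv : ConvexOn ℝ Set.univ f)
    (hf : Monotone f) {x X y Y : ℝ} (hx : 0 ≤ x) (hy : 0 ≤ y) (hxX : x ≤ X) (hyY : y ≤ Y) :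
    f (x * Y) + f (X * y) ≤ f (x * y) + f (X * Y) :=
  calc f (x * Y) + f (X * y)
      ≤ f (x * y) + f (x * Y + X * y - x * y) :=
        hconv.map_add_map_le_map_add_map_add_sub (by gcongr) (by gcongr)
    _ ≤ f (x * y) + f (X * Y) :=
        add_le_add_right (hf (by nlinarith [mul_nonneg (sub_nonneg.2 hxX) (sub_nonneg.2 hyY)])) _

def IsSupermodular {ι κ : Type*} [Preorder ι] [Preorder κ] (φ : ι → κ → ℝ) : Prop :=
  ∀ ⦃a b c d⦄, a ≤ b → c ≤ d → φ a d + φ b c ≤ φ a c + φ b d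

namespace IsSupermodular

variable {ι : Type*} [Fintype ι] [LinearOrder ι] {φ : ι → ι → ℝ}

theorem sum_apply_perm_le (hφ : IsSupermodular φ) (σ : Perm ι) :
    ∑ i, φ i (σ i) ≤ ∑ i, φ i i := by
  suffices h : ∀ s : Finset ι, ∀ σ : Perm ι, (∀ x, σ x ≠ x → x ∈ s) →
      ∑ i, φ i (σ i) ≤ ∑ i, φ i i from h univ σ fun x _ => mem_univ x
  intro s
  induction s using Finset.induction_on_max with
  | empty =>
    intro σ hσ
    simp_all
  | insert a s has ih =>
    intro σ hσ
    by_cases hσa : σ a = a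
    · refine ih σ fun x hx => mem_of_mem_insert_of_ne (hσ x hx) ?_
      rintro rfl
      exact hx hσa
    -- Swapping the values at `a` and `b := σ⁻¹ a` fixes `a`; supermodularity pays for the swap.
    set b := σ.symm a
    set τ := σ.trans (swap (σ a) a)
    have hle : ∀ x, σ x ≠ x → x ≤ a := fun x hx =>
      (mem_insert.1 (hσ x hx)).elim le_of_eq fun h => (has x h).le
    have hσb : σ b = a := σ.apply_symm_apply a
    have hba : b ≤ a := hle b fun h => hσa (by rw [← h.symm.trans hσb]; exact h)
    have hσa_le : σ a ≤ a := hle (σ a) (σ.injective.ne hσa)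
    have hτ_of_ne : ∀ x, x ≠ a → x ≠ b → τ x = σ x := fun x hxa hxb =>
      swap_apply_of_ne_of_ne (σ.injective.ne hxa) fun h => hxb (σ.injective (h.trans hσb.symm))
    have hτa : τ a = a := swap_apply_left (σ a) a
    have hτb : τ b = σ a := by simp only [τ, trans_apply, hσb, swap_apply_right]
    have hτ : ∀ x, τ x ≠ x → x ∈ s := by
      intro x hx
      have hxa : x ≠ a := by rintro rfl; exact hx hτa
      refine mem_of_mem_insert_of_ne (hσ x fun hσx => hx ?_) hxa
      rw [hτ_of_ne x hxa fun hxb => hxa (hσx.symm.trans (hxb ▸ hσb)), hσx]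
    have hsplit : ∑ i, (φ i (σ i) - φ i (τ i)) = (φ a (σ a) - φ a a) + (φ b a - φ b (σ a)) := by
      have hab : a ≠ b := fun h => hσa (by simpa [← h] using hσb)
      rw [Fintype.sum_eq_add a b hab fun x hx => ?_, hτa, hτb, hσb]
      rw [hτ_of_ne x hx.1 hx.2, sub_self]
    rw [sum_sub_distrib] at hsplit
    linarith [ih τ hτ, hφ hba hσa_le]

theorem sum_mul_le_of_mem_doublyStochastic (hφ : IsSupermodular φ) {R : Matrix ι ι ℝ}
    (hR : R ∈ doublyStochastic ℝ ι) : ∑ j, ∑ k, R j k * φ j k ≤ ∑ i, φ i i := by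
  have hperm : ∀ σ : Perm ι, ∑ j, ∑ k, σ.permMatrix ℝ j k * φ j k = ∑ i, φ i (σ i) := by
    intro σ
    simp [PEquiv.toMatrix_apply]
  have hhalf : Convex ℝ {M : Matrix ι ι ℝ | ∑ j, ∑ k, M j k * φ j k ≤ ∑ i, φ i i} :=
    convex_halfSpace_le ⟨fun M N => by simp [add_mul, sum_add_distrib],
      fun c M => by simp [mul_assoc, mul_sum]⟩ _
  rw [← SetLike.mem_coe, doublyStochastic_eq_convexHull_permMatrix] at hR
  refine convexHull_min ?_ hhalf hR
  rintro _ ⟨σ, rfl⟩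
  simpa [hperm] using hφ.sum_apply_perm_le σ

end IsSupermodular

theorem ConvexOn.map_sum_mul_sum_le {ι κ : Type*} [Fintype ι] [Fintype κ] {f : ℝ → ℝ}
    (hf : ConvexOn ℝ Set.univ f) {p : ι → ℝ} {q : κ → ℝ} (hp0 : ∀ j, 0 ≤ p j) (hq0 : ∀ k, 0 ≤ q k)
    (hp1 : ∑ j, p j = 1) (hq1 : ∑ k, q k = 1) (x : ι → ℝ) (y : κ → ℝ) :
    f ((∑ j, p j * x j) * ∑ k, q k * y k) ≤ ∑ j, ∑ k, p j * q k * f (x j * y k) := by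
  have h := hf.map_sum_le (t := univ ×ˢ univ) (w := fun jk => p jk.1 * q jk.2)
    (p := fun jk => x jk.1 * y jk.2) (fun _ _ => mul_nonneg (hp0 _) (hq0 _))
    (by rw [sum_product, ← sum_mul_sum, hp1, hq1, one_mul]) fun _ _ => Set.mem_univ _
  have hxy : (∑ j, p j * x j) * ∑ k, q k * y k = ∑ j, ∑ k, p j * q k * (x j * y k) := by
    rw [sum_mul_sum]
    exact sum_congr rfl fun j _ => sum_congr rfl fun k _ => by ring
  simpa only [smul_eq_mul, sum_product, hxy] using h

namespace Matrix

variable {n : Type*} [Fintype n] [DecidableEq n]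

theorem map_sq_mem_doublyStochastic_of_mem_unitaryGroup {U : Matrix n n ℝ}
    (hU : U ∈ unitaryGroup n ℝ) : U.map (· ^ 2) ∈ doublyStochastic ℝ n := by
  refine mem_doublyStochastic_iff_sum.2 ⟨fun i j => sq_nonneg _, fun i => ?_, fun j => ?_⟩
  · simpa [mul_apply, sq] using congr_fun₂ (mem_unitaryGroup_iff.1 hU) i i
  · simpa [mul_apply, sq] using congr_fun₂ (mem_unitaryGroup_iff'.1 hU) j j

namespace IsHermitian

theorem diag_eq_sum_sq_mul_eigenvalues {A : Matrix n n ℝ} (hA : A.IsHermitian) (i : n) :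
    A i i = ∑ k, (hA.eigenvectorUnitary : Matrix n n ℝ) i k ^ 2 * hA.eigenvalues k := by
  conv_lhs => rw [hA.spectral_theorem]
  rw [Unitary.conjStarAlgAut_apply, mul_apply]
  refine sum_congr rfl fun k _ => ?_
  simp only [mul_diagonal, star_apply, star_trivial, Function.comp_apply,
    RCLike.ofReal_real_eq_id, id]
  ring

theorem exists_mem_doublyStochastic_diag_eq {A : Matrix n n ℝ} (hA : A.IsHermitian)
    (e : Perm n) : ∃ S ∈ doublyStochastic ℝ n, ∀ i, A i i = ∑ j, S i j * hA.eigenvalues (e j) := by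
  refine ⟨((hA.eigenvectorUnitary : Matrix n n ℝ).map (· ^ 2)).reindex (Equiv.refl n) e.symm,
    reindex_mem_doublyStochastic
      (map_sq_mem_doublyStochastic_of_mem_unitaryGroup hA.eigenvectorUnitary.2), fun i => ?_⟩
  rw [hA.diag_eq_sum_sq_mul_eigenvalues, ← Equiv.sum_comp e]
  rfl

end IsHermitian

end Matrix

/-- Trace inequality for eigenvalues vs diagonal entries of two symmetric
positive definite matrices (Lemma 2.2 of the paper). -/
theorem stmt0 {n : ℕ} (A B : Matrix (Fin n) (Fin n) ℝ)
    (hA : A.IsHermitian) (hB : B.IsHermitian)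
    (hApos : A.PosDef) (hBpos : B.PosDef)
    (μ ν : Fin n → ℝ) (hμmono : Monotone μ) (hνmono : Monotone ν)
    (hμ : ∃ e : Equiv.Perm (Fin n), ∀ i, μ i = hA.eigenvalues (e i))
    (hν : ∃ e : Equiv.Perm (Fin n), ∀ i, ν i = hB.eigenvalues (e i))
    (f : ℝ → ℝ) (hf : Monotone f) (hconv : ConvexOn ℝ Set.univ f) :
    ∑ i, f (A i i * B i i) ≤ ∑ i, f (μ i * ν i) := by
  obtain ⟨e, he⟩ := hμ
  obtain ⟨d, hd⟩ := hν
  obtain ⟨S, hS, hAS⟩ := hA.exists_mem_doublyStochastic_diag_eq e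
  obtain ⟨T, hT, hBT⟩ := hB.exists_mem_doublyStochastic_diag_eq d
  have hμ0 : ∀ i, 0 ≤ μ i := fun i => he i ▸ (hApos.eigenvalues_pos (e i)).le
  have hν0 : ∀ i, 0 ≤ ν i := fun i => hd i ▸ (hBpos.eigenvalues_pos (d i)).le
  have hφ : IsSupermodular fun j k => f (μ j * ν k) := fun j j' k k' hj hk =>
    hconv.map_mul_add_map_mul_le hf (hμ0 j) (hν0 k) (hμmono hj) (hνmono hk)
  calc ∑ i, f (A i i * B i i)
      = ∑ i, f ((∑ j, S i j * μ j) * ∑ k, T i k * ν k) := by simp only [hAS, hBT, he, hd]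
    _ ≤ ∑ i, ∑ j, ∑ k, S i j * T i k * f (μ j * ν k) := sum_le_sum fun i _ =>
        hconv.map_sum_mul_sum_le (fun j => nonneg_of_mem_doublyStochastic hS)
          (fun k => nonneg_of_mem_doublyStochastic hT) (sum_row_of_mem_doublyStochastic hS i)
          (sum_row_of_mem_doublyStochastic hT i) μ ν
    _ = ∑ j, ∑ k, (Sᵀ * T) j k * f (μ j * ν k) := by
        simp only [mul_apply, transpose_apply, sum_mul]
        rw [sum_comm]
        exact sum_congr rfl fun j _ => sum_comm
    _ ≤ ∑ i, f (μ i * ν i) := hφ.sum_mul_le_of_mem_doublyStochastic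
        (mul_mem (transpose_mem_doublyStochastic_iff.2 hS) hT)
end

section
/- Let A and B be symmetric positive semidefinite n×n real matrices and let A∘B denote their Hadamard (entrywise) product. Then the eigenvalues of A∘B, listed in decreasing order, are weakly majorized by the sequence (λᵢ(A)·λᵢ(B))ᵢ where eigenvalues of A and B are both listed in decreasing order: for each k ≤ n, ∑_{i=1}^k λᵢ(A∘B) ≤ ∑_{i=1}^k λᵢ(A)·λᵢ(B). -/
/-!
Write `A = ∑ μᵢ uᵢuᵢᵀ`, `B = ∑ νⱼ vⱼvⱼᵀ` and `A ∘ B = ∑ ηₜ wₜwₜᵀ` with orthonormal eigenvectors.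
Then `ηₜ = wₜᵀ (A ∘ B) wₜ = ∑ᵢⱼ μᵢ νⱼ ⟨wₜ, uᵢ ∘ vⱼ⟩²`, so `∑_{t<k} ηₜ = ∑ᵢⱼ μᵢ νⱼ cᵢⱼ` with
`cᵢⱼ = ∑_{t<k} ⟨wₜ, uᵢ ∘ vⱼ⟩²`. By Parseval, `c` is doubly substochastic with total mass `k`,
and for such `c` and decreasing nonnegative `μ`, `ν`, two Abel summations give
`∑ᵢⱼ μᵢ νⱼ cᵢⱼ ≤ ∑_{i<k} μᵢ νᵢ`.
-/

open Finset Matrix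

theorem Fin.sum_mul_le_sum_mul_of_partialSums_le {n : ℕ} {μ x y : Fin n → ℝ}
    (hμ : Antitone μ) (hμ0 : ∀ i, 0 ≤ μ i)
    (hxy : ∀ m ≤ n, ∑ i ∈ univ.filter (fun i : Fin n => (i : ℕ) < m), x i ≤
      ∑ i ∈ univ.filter (fun i : Fin n => (i : ℕ) < m), y i) :
    ∑ i, μ i * x i ≤ ∑ i, μ i * y i := by
  induction n with
  | zero => simp
  | succ n ih =>
    have hrestrict (z : Fin (n + 1) → ℝ) {m : ℕ} (hm : m ≤ n) :
        ∑ i ∈ univ.filter (fun i : Fin (n + 1) => (i : ℕ) < m), z i =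
          ∑ i ∈ univ.filter (fun i : Fin n => (i : ℕ) < m), z i.castSucc := by
      simp [sum_filter, Fin.sum_univ_castSucc, hm.not_gt]
    have hlast := hxy (n + 1) le_rfl
    simp only [Fin.is_lt, filter_true] at hlast
    set μ' : Fin n → ℝ := fun i => μ i.castSucc - μ (Fin.last n)
    have hhead : ∑ i : Fin n, μ' i * x i.castSucc ≤ ∑ i : Fin n, μ' i * y i.castSucc :=
      ih (fun i j hij => sub_le_sub_right (hμ (Fin.castSucc_le_castSucc_iff.2 hij)) _)
        (fun i => sub_nonneg.2 (hμ (Fin.le_last _)))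
        (fun m hm => by
          rw [← hrestrict x (by omega), ← hrestrict y (by omega)]
          exact hxy m (by omega))
    -- `μ = μ' + μ (last n)` on the first `n` indices, with `μ'` again antitone and nonnegative.
    have hsplit (z : Fin (n + 1) → ℝ) :
        ∑ i, μ i * z i = ∑ i : Fin n, μ' i * z i.castSucc + μ (Fin.last n) * ∑ i, z i := by
      simp only [μ', Fin.sum_univ_castSucc, sub_mul, sum_sub_distrib, mul_add, mul_sum]
      ring
    rw [hsplit, hsplit]
    exact add_le_add hhead (mul_le_mul_of_nonneg_left hlast (hμ0 _))

theorem Fin.sum_mul_le_sum_filter_lt_of_le_one {n p : ℕ} {ν d : Fin n → ℝ}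
    (hν : Antitone ν) (hν0 : ∀ j, 0 ≤ ν j) (hd0 : ∀ j, 0 ≤ d j) (hd1 : ∀ j, d j ≤ 1)
    (hsum : ∑ j, d j ≤ p) :
    ∑ j, ν j * d j ≤ ∑ j ∈ univ.filter (fun j : Fin n => (j : ℕ) < p), ν j := by
  have hind : ∑ j ∈ univ.filter (fun j : Fin n => (j : ℕ) < p), ν j =
      ∑ j, ν j * if (j : ℕ) < p then 1 else 0 := by
    simp [sum_filter]
  rw [hind]
  refine sum_mul_le_sum_mul_of_partialSums_le hν hν0 fun m _ => ?_
  have hcard : ∑ j ∈ univ.filter (fun j : Fin n => (j : ℕ) < m), d j ≤ min (n : ℝ) m := by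
    calc _ ≤ ∑ j ∈ univ.filter (fun j : Fin n => (j : ℕ) < m), (1 : ℝ) :=
          sum_le_sum fun j _ => hd1 j
      _ = min (n : ℝ) m := by simp [card_filter_val_lt]
  have htot : ∑ j ∈ univ.filter (fun j : Fin n => (j : ℕ) < m), d j ≤ p :=
    (sum_le_sum_of_subset_of_nonneg (subset_univ _) fun j _ _ => hd0 j).trans hsum
  simp only [sum_boole, filter_filter, ← lt_min_iff, card_filter_val_lt, Nat.cast_min]
  rw [← min_assoc]
  exact le_min hcard htot

theorem Fin.sum_sum_mul_le_of_doublySubstochastic {n k : ℕ} {μ ν : Fin n → ℝ}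
    (hμ : Antitone μ) (hν : Antitone ν) (hμ0 : ∀ i, 0 ≤ μ i) (hν0 : ∀ j, 0 ≤ ν j)
    {c : Matrix (Fin n) (Fin n) ℝ} (hc0 : ∀ i j, 0 ≤ c i j)
    (hrow : ∀ i, ∑ j, c i j ≤ 1) (hcol : ∀ j, ∑ i, c i j ≤ 1) (htot : ∑ i, ∑ j, c i j ≤ k) :
    ∑ i, ∑ j, μ i * ν j * c i j ≤
      ∑ i ∈ univ.filter (fun i : Fin n => (i : ℕ) < k), μ i * ν i := by
  have hlhs : ∑ i, ∑ j, μ i * ν j * c i j = ∑ i, μ i * ∑ j, ν j * c i j := by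
    simp only [mul_sum, mul_assoc]
  have hrhs : ∑ i ∈ univ.filter (fun i : Fin n => (i : ℕ) < k), μ i * ν i =
      ∑ i, μ i * if (i : ℕ) < k then ν i else 0 := by
    simp [sum_filter]
  rw [hlhs, hrhs]
  refine sum_mul_le_sum_mul_of_partialSums_le hμ hμ0 fun m _ => ?_
  set d : Fin n → ℝ := fun j => ∑ i ∈ univ.filter (fun i : Fin n => (i : ℕ) < m), c i j
  have hlhs' : ∑ i ∈ univ.filter (fun i : Fin n => (i : ℕ) < m), ∑ j, ν j * c i j =
      ∑ j, ν j * d j := by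
    rw [sum_comm]
    simp only [d, mul_sum]
  have hrhs' :
      ∑ i ∈ univ.filter (fun i : Fin n => (i : ℕ) < m), (if (i : ℕ) < k then ν i else 0) =
      ∑ i ∈ univ.filter (fun i : Fin n => (i : ℕ) < min m k), ν i := by
    simp only [← sum_filter, filter_filter, lt_min_iff]
  rw [hlhs', hrhs']
  refine sum_mul_le_sum_filter_lt_of_le_one hν hν0 (fun j => sum_nonneg fun i _ => hc0 i j)
    (fun j => (sum_le_sum_of_subset_of_nonneg (subset_univ _) fun i _ _ => hc0 i j).trans
      (hcol j)) ?_
  have hrows : ∑ j, d j = ∑ i ∈ univ.filter (fun i : Fin n => (i : ℕ) < m), ∑ j, c i j :=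
    sum_comm
  have hm : ∑ j, d j ≤ m := calc
    _ ≤ ∑ i ∈ univ.filter (fun i : Fin n => (i : ℕ) < m), (1 : ℝ) :=
      hrows ▸ sum_le_sum fun i _ => hrow i
    _ ≤ m := by simp [card_filter_val_lt]
  have hk : ∑ j, d j ≤ k := hrows ▸ (sum_le_sum_of_subset_of_nonneg (subset_univ _)
    fun i _ _ => sum_nonneg fun j _ => hc0 i j).trans htot
  rw [Nat.cast_min]
  exact le_min hm hk

section

variable {m : Type*} [Fintype m] [DecidableEq m]

theorem Matrix.IsHermitian.exists_orthogonal_eq_mul_diagonal_mul_transpose {A : Matrix m m ℝ}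
    (hA : A.IsHermitian) {μ : m → ℝ} (hμ : ∃ e : Equiv.Perm m, ∀ i, μ i = hA.eigenvalues (e i)) :
    ∃ U ∈ orthogonalGroup m ℝ, A = U * diagonal μ * Uᵀ := by
  obtain ⟨e, he⟩ := hμ
  set U₀ : Matrix m m ℝ := (hA.eigenvectorUnitary : Matrix m m ℝ)
  have hU₀ : U₀ * U₀ᵀ = 1 := (mem_orthogonalGroup_iff m ℝ).mp hA.eigenvectorUnitary.2
  have hA₀ : A = U₀ * diagonal hA.eigenvalues * U₀ᵀ := by
    conv_lhs => rw [hA.spectral_theorem]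
    simp [U₀, Unitary.conjStarAlgAut_apply, star_eq_conjTranspose]
  have hμ : diagonal μ = (diagonal hA.eigenvalues).submatrix e e := by
    rw [submatrix_diagonal_equiv]; exact congrArg diagonal (funext he)
  refine ⟨U₀.submatrix id e, (mem_orthogonalGroup_iff m ℝ).mpr ?_, ?_⟩
  · rw [transpose_submatrix, submatrix_mul_equiv, submatrix_id_id, hU₀]
  · rw [hμ, transpose_submatrix, submatrix_mul_equiv, submatrix_mul_equiv, submatrix_id_id]
    exact hA₀

namespace Matrix

theorem sum_sq_mul_apply_of_mem_orthogonalGroup (X : Matrix m m ℝ) {V : Matrix m m ℝ}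
    (hV : V ∈ orthogonalGroup m ℝ) (i : m) : ∑ j, (X * V) i j ^ 2 = ∑ a, X i a ^ 2 := by
  have h : (X i ᵥ* V) ⬝ᵥ (X i ᵥ* V) = X i ⬝ᵥ X i := by
    rw [← dotProduct_mulVec, ← mulVec_transpose, mulVec_mulVec,
      (mem_orthogonalGroup_iff m ℝ).mp hV, one_mulVec]
  simp only [dotProduct, sq] at h ⊢
  exact h

theorem sum_sq_row_of_mem_orthogonalGroup {U : Matrix m m ℝ} (hU : U ∈ orthogonalGroup m ℝ)
    (a : m) : ∑ i, U a i ^ 2 = 1 := by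
  simpa [mul_apply, sq] using congrFun₂ ((mem_orthogonalGroup_iff m ℝ).mp hU) a a

theorem sum_sq_col_of_mem_orthogonalGroup {U : Matrix m m ℝ} (hU : U ∈ orthogonalGroup m ℝ)
    (i : m) : ∑ a, U a i ^ 2 = 1 := by
  simpa [mul_apply, sq] using congrFun₂ ((mem_orthogonalGroup_iff' m ℝ).mp hU) i i

theorem sum_sq_transpose_mul_diagonal_mul_apply_of_mem_orthogonalGroup (U : Matrix m m ℝ)
    {V : Matrix m m ℝ} (hV : V ∈ orthogonalGroup m ℝ) (w : m → ℝ) (i : m) :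
    ∑ j, (Uᵀ * diagonal w * V) i j ^ 2 = ∑ a, (U a i * w a) ^ 2 := by
  rw [sum_sq_mul_apply_of_mem_orthogonalGroup _ hV]
  simp [mul_diagonal]

theorem dotProduct_hadamard_mulVec (U V : Matrix m m ℝ) (μ ν x : m → ℝ) :
    x ⬝ᵥ ((U * diagonal μ * Uᵀ) ⊙ (V * diagonal ν * Vᵀ)) *ᵥ x =
      ∑ i, ∑ j, μ i * ν j * (Uᵀ * diagonal x * V) i j ^ 2 := by
  set C := Uᵀ * diagonal x * V
  have htrace : x ⬝ᵥ ((U * diagonal μ * Uᵀ) ⊙ (V * diagonal ν * Vᵀ)) *ᵥ x =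
      trace (diagonal μ * (C * diagonal ν * Cᵀ)) := by
    rw [dotProduct_mulVec, dotProduct_vecMul_hadamard]
    simp only [C, transpose_mul, transpose_transpose, diagonal_transpose, Matrix.mul_assoc]
    rw [trace_mul_comm (diagonal x), Matrix.mul_assoc, trace_mul_comm U]
    simp only [Matrix.mul_assoc]
  rw [htrace]
  simp only [trace, diag, diagonal_mul, mul_apply (M := C * diagonal ν), mul_diagonal,
    transpose_apply, mul_sum]
  refine sum_congr rfl fun i _ => sum_congr rfl fun j _ => by ring

theorem dotProduct_mulVec_col_eq_of_eq_mul_diagonal_mul_transpose {M W : Matrix m m ℝ}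
    {η : m → ℝ} (hW : W ∈ orthogonalGroup m ℝ) (hM : M = W * diagonal η * Wᵀ) (t : m) :
    Wᵀ t ⬝ᵥ M *ᵥ Wᵀ t = η t := by
  have hWW : Wᵀ * W = 1 := (mem_orthogonalGroup_iff' m ℝ).mp hW
  rw [← mul_mul_apply, hM]
  simp only [Matrix.mul_assoc, hWW, Matrix.mul_one]
  rw [← Matrix.mul_assoc, hWW, Matrix.one_mul, diagonal_apply_eq]

end Matrix

/-- `(Uᵀ * diagonal w * V) i j = ⟨w, uᵢ ∘ vⱼ⟩` for the columns `uᵢ`, `vⱼ` of `U`, `V`, and `Wᵀ t`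
is the column `wₜ` of `W`. -/
def hadamardOverlapSq (U V W : Matrix m m ℝ) (K : Finset m) (i j : m) : ℝ :=
  ∑ t ∈ K, (Uᵀ * diagonal (Wᵀ t) * V) i j ^ 2

section hadamardOverlapSq

variable {U V W : Matrix m m ℝ}

theorem hadamardOverlapSq_comm (K : Finset m) (i j : m) :
    hadamardOverlapSq U V W K i j = hadamardOverlapSq V U W K j i := by
  simp only [hadamardOverlapSq, ← transpose_apply (Uᵀ * _ * V), transpose_mul, diagonal_transpose,
    transpose_transpose, Matrix.mul_assoc]

theorem sum_hadamardOverlapSq_le_one (hU : U ∈ orthogonalGroup m ℝ)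
    (hV : V ∈ orthogonalGroup m ℝ) (hW : W ∈ orthogonalGroup m ℝ) (K : Finset m) (i : m) :
    ∑ j, hadamardOverlapSq U V W K i j ≤ 1 := calc
  ∑ j, hadamardOverlapSq U V W K i j = ∑ t ∈ K, ∑ a, (U a i * W a t) ^ 2 := by
    simp only [hadamardOverlapSq, sum_comm (s := univ) (t := K),
      sum_sq_transpose_mul_diagonal_mul_apply_of_mem_orthogonalGroup U hV,
      transpose_apply]
  _ ≤ ∑ t, ∑ a, (U a i * W a t) ^ 2 :=
    sum_le_sum_of_subset_of_nonneg (subset_univ K) fun _ _ _ => sum_nonneg fun _ _ => sq_nonneg _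
  _ = ∑ a, U a i ^ 2 * ∑ t, W a t ^ 2 := by simp only [mul_pow, mul_sum]; exact sum_comm
  _ = 1 := by simp [sum_sq_row_of_mem_orthogonalGroup hW, sum_sq_col_of_mem_orthogonalGroup hU]

theorem sum_sum_hadamardOverlapSq_eq_card (hU : U ∈ orthogonalGroup m ℝ)
    (hV : V ∈ orthogonalGroup m ℝ) (hW : W ∈ orthogonalGroup m ℝ) (K : Finset m) :
    ∑ i, ∑ j, hadamardOverlapSq U V W K i j = K.card := calc
  ∑ i, ∑ j, hadamardOverlapSq U V W K i j = ∑ t ∈ K, ∑ a, W a t ^ 2 * ∑ i, U a i ^ 2 := by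
    simp only [hadamardOverlapSq, sum_comm (s := univ) (t := K),
      sum_sq_transpose_mul_diagonal_mul_apply_of_mem_orthogonalGroup U hV,
      transpose_apply, mul_pow, mul_sum]
    refine sum_congr rfl fun t _ => ?_
    rw [sum_comm]
    simp only [mul_comm]
  _ = K.card := by simp [sum_sq_row_of_mem_orthogonalGroup hU, sum_sq_col_of_mem_orthogonalGroup hW]

end hadamardOverlapSq

end

theorem stmt2_general {n : ℕ} (A B : Matrix (Fin n) (Fin n) ℝ)
    (hA : A.IsHermitian) (hB : B.IsHermitian)
    (hApos : A.PosSemidef) (hBpos : B.PosSemidef)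
    (hAB : (Matrix.hadamard A B).IsHermitian)
    (μ ν η : Fin n → ℝ) (hμmono : Antitone μ) (hνmono : Antitone ν)
    (hμ : ∃ e : Equiv.Perm (Fin n), ∀ i, μ i = hA.eigenvalues (e i))
    (hν : ∃ e : Equiv.Perm (Fin n), ∀ i, ν i = hB.eigenvalues (e i))
    (hη : ∃ e : Equiv.Perm (Fin n), ∀ i, η i = hAB.eigenvalues (e i)) :
    ∀ k : ℕ, k ≤ n →
      ∑ i ∈ univ.filter (fun i : Fin n => (i : ℕ) < k), η i ≤
        ∑ i ∈ univ.filter (fun i : Fin n => (i : ℕ) < k), μ i * ν i := by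
  intro k _
  have hμ0 : ∀ i, 0 ≤ μ i := by
    obtain ⟨e, he⟩ := hμ
    exact fun i => (he i).symm ▸ hApos.eigenvalues_nonneg _
  have hν0 : ∀ j, 0 ≤ ν j := by
    obtain ⟨e, he⟩ := hν
    exact fun j => (he j).symm ▸ hBpos.eigenvalues_nonneg _
  obtain ⟨U, hU, hAU⟩ := hA.exists_orthogonal_eq_mul_diagonal_mul_transpose hμ
  obtain ⟨V, hV, hBV⟩ := hB.exists_orthogonal_eq_mul_diagonal_mul_transpose hν
  obtain ⟨W, hW, hABW⟩ := hAB.exists_orthogonal_eq_mul_diagonal_mul_transpose hη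
  set K := univ.filter (fun i : Fin n => (i : ℕ) < k)
  have hηK : ∑ t ∈ K, η t = ∑ i, ∑ j, μ i * ν j * hadamardOverlapSq U V W K i j := by
    have hηt (t : Fin n) : η t = ∑ i, ∑ j, μ i * ν j * (Uᵀ * diagonal (Wᵀ t) * V) i j ^ 2 := by
      rw [← dotProduct_mulVec_col_eq_of_eq_mul_diagonal_mul_transpose hW hABW, hAU, hBV,
        dotProduct_hadamard_mulVec]
    simp only [hηt, hadamardOverlapSq, mul_sum]
    rw [sum_comm]
    exact sum_congr rfl fun i _ => sum_comm
  rw [hηK]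
  refine Fin.sum_sum_mul_le_of_doublySubstochastic hμmono hνmono hμ0 hν0
    (fun i j => sum_nonneg fun t _ => sq_nonneg _) (sum_hadamardOverlapSq_le_one hU hV hW K)
    (fun j => ?_) ?_
  · simpa only [hadamardOverlapSq_comm] using sum_hadamardOverlapSq_le_one hV hU hW K j
  · rw [sum_sum_hadamardOverlapSq_eq_card hU hV hW K]
    exact_mod_cast Fin.card_filter_val_lt.trans_le (min_le_right _ _)

/-- Weak majorization of the eigenvalues of the Hadamard product by the
products of eigenvalues (all listed in decreasing order). -/
theorem stmt2 {n : ℕ} (A B : Matrix (Fin n) (Fin n) ℝ)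
    (hA : A.IsHermitian) (hB : B.IsHermitian)
    (hApos : A.PosSemidef) (hBpos : B.PosSemidef)
    (hAB : (Matrix.hadamard A B).IsHermitian)
    (μ ν η : Fin n → ℝ) (hμmono : Antitone μ) (hνmono : Antitone ν) (hηmono : Antitone η)
    (hμ : ∃ e : Equiv.Perm (Fin n), ∀ i, μ i = hA.eigenvalues (e i))
    (hν : ∃ e : Equiv.Perm (Fin n), ∀ i, ν i = hB.eigenvalues (e i))
    (hη : ∃ e : Equiv.Perm (Fin n), ∀ i, η i = hAB.eigenvalues (e i)) :
    ∀ k : ℕ, k ≤ n →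
      ∑ i ∈ univ.filter (fun i : Fin n => (i : ℕ) < k), η i ≤
        ∑ i ∈ univ.filter (fun i : Fin n => (i : ℕ) < k), μ i * ν i :=
  stmt2_general A B hA hB hApos hBpos hAB μ ν η hμmono hνmono hμ hν hη
end

section
/- Schur's theorem: For a real symmetric n×n matrix A, the vector of diagonal entries (A(1,1),...,A(n,n)) is majorized by the vector of eigenvalues (λ₁(A),...,λₙ(A)); that is, for each k, the sum of the k largest diagonal entries is at most the sum of the k largest eigenvalues, with equality of total sums (both equal to the trace). -/
/-!
Diagonalize `A = U diag(λ) Uᴴ` with `U` unitary. Then `A i i = ∑ j |U i j|² λ j`, and the matrix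
`(|U i j|²)` is doubly stochastic, so the diagonal is `B λ` for a doubly stochastic `B`. For
any `k` rows of `B` the column sums `c j` lie in `[0, 1]` and add up to `k`, and among such weight
vectors `∑ c j λ j` is largest when the weight sits on the `k` largest eigenvalues.
-/

open Finset Matrix

lemma norm_sq_mem_doublyStochastic_of_mem_unitaryGroup {𝕜 n : Type*} [RCLike 𝕜] [Fintype n] [DecidableEq n]
    {U : Matrix n n 𝕜} (hU : U ∈ unitaryGroup n 𝕜) :
    (of fun i j => ‖U i j‖ ^ 2 : Matrix n n ℝ) ∈ doublyStochastic ℝ n := by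
  have h_row : ∀ i, ∑ j, ‖U i j‖ ^ 2 = 1 := fun i => by
    have := congr_fun₂ (mem_unitaryGroup_iff.mp hU) i i
    simp only [mul_apply, star_apply, RCLike.star_def, RCLike.mul_conj, one_apply_eq] at this
    exact_mod_cast this
  have h_col : ∀ j, ∑ i, ‖U i j‖ ^ 2 = 1 := fun j => by
    have := congr_fun₂ (mem_unitaryGroup_iff'.mp hU) j j
    simp only [mul_apply, star_apply, RCLike.star_def, RCLike.conj_mul, one_apply_eq] at this
    exact_mod_cast this
  exact mem_doublyStochastic_iff_sum.mpr ⟨fun _ _ => sq_nonneg _, h_row, h_col⟩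

lemma Matrix.IsHermitian.apply_self_eq_mulVec_eigenvalues {𝕜 n : Type*} [RCLike 𝕜] [Fintype n]
    [DecidableEq n] {A : Matrix n n 𝕜} (hA : A.IsHermitian) (i : n) :
    A i i =
      (((of fun i j => ‖hA.eigenvectorUnitary i j‖ ^ 2 : Matrix n n ℝ) *ᵥ hA.eigenvalues) i : ℝ) := by
  conv_lhs => rw [hA.spectral_theorem]
  simp [mul_apply, diagonal_apply, mulVec, dotProduct, RCLike.mul_conj, mul_right_comm]

lemma sum_mul_le_sum_of_threshold {ι : Type*} [Fintype ι] [DecidableEq ι] (S : Finset ι)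
    {x c : ι → ℝ} {t : ℝ} (hS : ∀ j ∈ S, t ≤ x j) (hSc : ∀ j ∉ S, x j ≤ t)
    (hc₀ : ∀ j, 0 ≤ c j) (hc₁ : ∀ j, c j ≤ 1) (hc : ∑ j, c j = #S) :
    ∑ j, c j * x j ≤ ∑ j ∈ S, x j := by
  -- Termwise, `1_S - c` and `x - t` have the same sign.
  have h_nonneg : 0 ≤ ∑ j, ((if j ∈ S then 1 else 0) - c j) * (x j - t) := by
    refine sum_nonneg fun j _ => ?_
    split_ifs with hj
    · exact mul_nonneg (sub_nonneg.mpr (hc₁ j)) (sub_nonneg.mpr (hS j hj))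
    · exact mul_nonneg_of_nonpos_of_nonpos (by linarith [hc₀ j]) (sub_nonpos.mpr (hSc j hj))
  have h_expand : ∑ j, ((if j ∈ S then 1 else 0) - c j) * (x j - t)
      = ∑ j ∈ S, x j - ∑ j, c j * x j - t * (#S - ∑ j, c j) := by
    simp only [sub_mul, mul_sub, sum_sub_distrib, ite_mul, one_mul, zero_mul, sum_ite_mem,
      univ_inter, sum_const, nsmul_eq_mul, ← sum_mul, mul_comm t]
  rw [h_expand, hc, sub_self, mul_zero, sub_zero] at h_nonneg
  linarith

lemma Antitone.exists_separating_of_val_lt {α : Type*} [Preorder α] [Nonempty α] {n : ℕ}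
    {x : Fin n → α} (hx : Antitone x) (k : ℕ) :
    ∃ t, (∀ j : Fin n, (j : ℕ) < k → t ≤ x j) ∧ ∀ j : Fin n, k ≤ (j : ℕ) → x j ≤ t := by
  rcases Nat.eq_zero_or_pos n with rfl | hn
  · exact ⟨Classical.arbitrary α, fun j => j.elim0, fun j => j.elim0⟩
  · -- `k - 1` truncates to `0` when `k = 0`, which still gives a valid threshold.
    refine ⟨x ⟨min (k - 1) (n - 1), by omega⟩, fun j hj => hx ?_, fun j hj => hx ?_⟩ <;>
      simp only [Fin.le_def] <;> omega

lemma sum_mulVec_le_sum_filter_val_lt_card {n : ℕ} {B : Matrix (Fin n) (Fin n) ℝ}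
    (hB : B ∈ doublyStochastic ℝ (Fin n)) {x : Fin n → ℝ} (hx : Antitone x) (S : Finset (Fin n)) :
    ∑ i ∈ S, (B *ᵥ x) i ≤ ∑ j ∈ univ.filter (fun j : Fin n => (j : ℕ) < #S), x j := by
  obtain ⟨t, ht_lt, ht_ge⟩ := hx.exists_separating_of_val_lt #S
  have h_card : #(univ.filter fun j : Fin n => (j : ℕ) < #S) = #S := by
    rw [Fin.card_filter_val_lt, min_eq_right (by simpa using card_le_univ S)]
  calc ∑ i ∈ S, (B *ᵥ x) i = ∑ j, (∑ i ∈ S, B i j) * x j := by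
        simp only [mulVec, dotProduct, sum_mul]
        exact sum_comm
    _ ≤ _ := by
      refine sum_mul_le_sum_of_threshold _ (fun j hj => ht_lt j (by simpa using hj))
        (fun j hj => ht_ge j (by simpa using hj))
        (fun j => sum_nonneg fun i _ => nonneg_of_mem_doublyStochastic hB)
        (fun j => ?_) ?_
      · calc ∑ i ∈ S, B i j ≤ ∑ i, B i j :=
              sum_le_univ_sum_of_nonneg fun i => nonneg_of_mem_doublyStochastic hB
          _ = 1 := sum_col_of_mem_doublyStochastic hB j
      · rw [sum_comm, h_card]
        simp [sum_row_of_mem_doublyStochastic hB]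

theorem stmt3_general {n : ℕ} (A : Matrix (Fin n) (Fin n) ℝ) (hA : A.IsHermitian)
    (d : Fin n → ℝ)
    (hdperm : ∃ e : Equiv.Perm (Fin n), ∀ i, d i = A (e i) (e i))
    (μ : Fin n → ℝ) (hμ : Antitone μ)
    (hμperm : ∃ e : Equiv.Perm (Fin n), ∀ i, μ i = hA.eigenvalues (e i)) :
    (∀ k : ℕ, k ≤ n →
      ∑ i ∈ univ.filter (fun i : Fin n => (i : ℕ) < k), d i ≤
        ∑ i ∈ univ.filter (fun i : Fin n => (i : ℕ) < k), μ i) ∧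
    ∑ i, d i = ∑ i, μ i := by
  obtain ⟨e, hd⟩ := hdperm
  obtain ⟨f, hμf⟩ := hμperm
  set B : Matrix (Fin n) (Fin n) ℝ := of fun i j => ‖hA.eigenvectorUnitary i j‖ ^ 2
  have hB : B.submatrix e f ∈ doublyStochastic ℝ (Fin n) :=
    reindex_mem_doublyStochastic (e₁ := e.symm) (e₂ := f.symm)
      (norm_sq_mem_doublyStochastic_of_mem_unitaryGroup hA.eigenvectorUnitary.2)
  have hd_eq : d = B.submatrix e f *ᵥ μ := by
    have hμ_eq : μ = hA.eigenvalues ∘ f := funext hμf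
    ext i
    rw [hd, hA.apply_self_eq_mulVec_eigenvalues, hμ_eq, submatrix_mulVec_equiv]
    simp [Function.comp_def, B]
  refine ⟨fun k hk => ?_, ?_⟩
  · have h_card : #(univ.filter fun i : Fin n => (i : ℕ) < k) = k := by
      rw [Fin.card_filter_val_lt, min_eq_right hk]
    simpa only [hd_eq, h_card] using sum_mulVec_le_sum_filter_val_lt_card hB hμ
      (univ.filter fun i : Fin n => (i : ℕ) < k)
  · rw [hd_eq, sum_mulVec_of_mem_doublyStochastic hB]

/-- Schur's theorem: the diagonal of a real symmetric matrix is majorized by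
its eigenvalues. Here `d` is a decreasing rearrangement of the diagonal and
`μ` a decreasing enumeration of the eigenvalues. -/
theorem stmt3 {n : ℕ} (A : Matrix (Fin n) (Fin n) ℝ) (hA : A.IsHermitian)
    (d : Fin n → ℝ) (hd : Antitone d)
    (hdperm : ∃ e : Equiv.Perm (Fin n), ∀ i, d i = A (e i) (e i))
    (μ : Fin n → ℝ) (hμ : Antitone μ)
    (hμperm : ∃ e : Equiv.Perm (Fin n), ∀ i, μ i = hA.eigenvalues (e i)) :
    (∀ k : ℕ, k ≤ n →
      ∑ i ∈ univ.filter (fun i : Fin n => (i : ℕ) < k), d i ≤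
        ∑ i ∈ univ.filter (fun i : Fin n => (i : ℕ) < k), μ i) ∧
    ∑ i, d i = ∑ i, μ i :=
  stmt3_general A hA d hdperm μ hμ hμperm
end
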